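/- In an acyclic finite abstract argumentation framework (the attack relation is well-founded), there is exactly one complete labelling, and it labels no argument UNDEC. -/
import Mathlib


namespace AAF12

inductive Label | IN | OUT | UNDEC
deriving DecidableEq

def completeLab {A : Type*} (R : A → A → Prop) (Lab : A → Label) : Prop :=
  ∀ x, (Lab x = Label.IN ↔ ∀ y, R y x → Lab y = Label.OUT) ∧
       (Lab x = Label.OUT ↔ ∃ y, R y x ∧ Lab y = Label.IN)

open Classical in
noncomputable def gl {A : Type*} (R : A → A → Prop)
    (hwf : WellFounded (fun y x => R y x)) : A → Label :=
  hwf.fix (fun x f => if ∀ y, ∀ h : R y x, f y h = Label.OUT then Label.IN else Label.OUT)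

open Classical in
lemma gl_eq {A : Type*} (R : A → A → Prop)
    (hwf : WellFounded (fun y x => R y x)) (x : A) :
    gl R hwf x = if ∀ y, R y x → gl R hwf y = Label.OUT then Label.IN else Label.OUT := by
  rw [gl, WellFounded.fix_eq]

lemma gl_not_undec {A : Type*} (R : A → A → Prop)
    (hwf : WellFounded (fun y x => R y x)) (x : A) :
    gl R hwf x ≠ Label.UNDEC := by
  rw [gl_eq]
  split <;> simp

lemma gl_complete {A : Type*} (R : A → A → Prop)
    (hwf : WellFounded (fun y x => R y x)) : completeLab R (gl R hwf) := by
  intro x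
  constructor
  · rw [gl_eq]
    split <;> rename_i h
    · simpa using h
    · constructor
      · intro hh; exact absurd hh (by decide)
      · intro hh; exact absurd hh h
  · rw [gl_eq]
    split <;> rename_i h
    · constructor
      · intro hh; exact absurd hh (by decide)
      · rintro ⟨y, hy, hin⟩
        rw [h y hy] at hin; exact absurd hin (by decide)
    · constructor
      · intro _
        push_neg at h
        obtain ⟨y, hy, hne⟩ := h
        refine ⟨y, hy, ?_⟩
        cases hh : gl R hwf y with
        | IN => rfl
        | OUT => exact absurd hh hne
        | UNDEC => exact absurd hh (gl_not_undec R hwf y)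
      · intro _; rfl

lemma complete_eq_gl {A : Type*} (R : A → A → Prop)
    (hwf : WellFounded (fun y x => R y x)) (Lab : A → Label)
    (hc : completeLab R Lab) : Lab = gl R hwf := by
  funext x
  induction x using hwf.induction with
  | _ x ih =>
    rw [gl_eq]
    split <;> rename_i h
    · exact (hc x).1.mpr fun y hy => (ih y hy).trans (h y hy)
    · push_neg at h
      obtain ⟨y, hy, hne⟩ := h
      refine (hc x).2.mpr ⟨y, hy, ?_⟩
      rw [ih y hy]
      cases hh : gl R hwf y with
      | IN => rfl
      | OUT => exact absurd hh hne
      | UNDEC => exact absurd hh (gl_not_undec R hwf y)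

theorem acyclic_unique_complete {A : Type*} [Fintype A] (R : A → A → Prop)
    (hwf : WellFounded (fun y x => R y x)) :
    (∃! Lab : A → Label, completeLab R Lab) ∧
      ∀ Lab : A → Label, completeLab R Lab → ∀ x, Lab x ≠ Label.UNDEC := by
  constructor
  · exact ⟨gl R hwf, gl_complete R hwf, fun Lab hc => complete_eq_gl R hwf Lab hc⟩
  · intro Lab hc x
    rw [complete_eq_gl R hwf Lab hc]
    exact gl_not_undec R hwf x

end AAF12
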